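/- Let a < b, let V ⊆ ℝ be an open set with λ(V ∩ [a,b]) < b - a and a ∉ V, b ∉ V, let n ≥ 1, and let h be affine on [a,b] with slope m > 1. Set α = λ([a,b]\V) and define f on [a,b] by f(x) = h(a) + ((m - 2^{-n+1})(b-a)/α + 2^{-n})·λ([a,x]\V) + 2^{-n}·λ([a,x] ∩ V). Then f is increasing (nondecreasing) on [a,b], f(a) = h(a), f is affine with slope 2^{-n} on each connected component of (a,b) ∩ V, and f is Lipschitz on [a,b]. -/

import Mathlib

open Set Filter MeasureTheory Topology
open scoped ENNReal NNReal

/-- `M_f(x,r) = sup { |f(x)-f(y)|/r : |x-y| ≤ r }`, valued in `[0,∞]`. -/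
noncomputable def Mf (f : ℝ → ℝ) (x r : ℝ) : ℝ≥0∞ :=
  ⨆ y ∈ {y : ℝ | |x - y| ≤ r}, ENNReal.ofReal (|f x - f y| / r)

/-- The big Lip function: `Lip f(x) = limsup_{r→0⁺} M_f(x,r)`. -/
noncomputable def bigLip (f : ℝ → ℝ) (x : ℝ) : ℝ≥0∞ :=
  Filter.limsup (fun r => Mf f x r) (𝓝[>] (0 : ℝ))

/-- The little lip function: `lip f(x) = liminf_{r→0⁺} M_f(x,r)`. -/
noncomputable def litLip (f : ℝ → ℝ) (x : ℝ) : ℝ≥0∞ :=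
  Filter.liminf (fun r => Mf f x r) (𝓝[>] (0 : ℝ))

/-- A set `E ⊆ ℝ` is trim if `λ(E ∩ (a,b)) < b - a` for every open interval `(a,b)`. -/
def Trim (E : Set ℝ) : Prop :=
  ∀ a b : ℝ, a < b → volume (E ∩ Ioo a b) < ENNReal.ofReal (b - a)

/-!
Up to the constant `h a`, `f x` is the Lebesgue measure of `[a, x]` with density `c` off `V`
and `2^{-n}` on `V`, where `c ≥ 2^{-n}` since `m > 1 ≥ 2^{1-n}`. Hence every increment
`f y - f x` with `x ≤ y` lies between `0` and `c (y - x)`, and equals `2^{-n} (y - x)` when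
`(x, y] ⊆ V`.
-/

noncomputable def weightedLength (a c d : ℝ) (V : Set ℝ) (x : ℝ) : ℝ :=
  c * volume.real (Icc a x \ V) + d * volume.real (Icc a x ∩ V)

section WeightedLength

variable {a c d x y : ℝ} {V : Set ℝ}

lemma measureReal_Icc_inter_add_Ioc_inter (hax : a ≤ x) (hxy : x ≤ y) (S : Set ℝ) :
    volume.real (Icc a x ∩ S) + volume.real (Ioc x y ∩ S) = volume.real (Icc a y ∩ S) := by
  have hlow : Icc a y ∩ S ∩ Iic x = Icc a x ∩ S := by
    ext z; simp only [mem_inter_iff, mem_Icc, mem_Iic]; grind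
  have hhigh : (Icc a y ∩ S) \ Iic x = Ioc x y ∩ S := by
    ext z; simp only [mem_inter_iff, Set.mem_sdiff, mem_Icc, mem_Ioc, mem_Iic]; grind
  rw [← hlow, ← hhigh, measureReal_inter_add_sdiff measurableSet_Iic
    ((measure_mono inter_subset_left).trans_lt measure_Icc_lt_top).ne]

lemma weightedLength_sub (hax : a ≤ x) (hxy : x ≤ y) :
    weightedLength a c d V y - weightedLength a c d V x =
      c * volume.real (Ioc x y \ V) + d * volume.real (Ioc x y ∩ V) := by
  rw [weightedLength, weightedLength, sdiff_eq, sdiff_eq,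
    ← measureReal_Icc_inter_add_Ioc_inter hax hxy Vᶜ,
    ← measureReal_Icc_inter_add_Ioc_inter hax hxy V, sdiff_eq]
  ring

lemma weightedLength_self : weightedLength a c d V a = 0 := by
  simp [weightedLength, Measure.real, measure_mono_null sdiff_subset (measure_singleton a),
    measure_mono_null inter_subset_left (measure_singleton a)]

lemma monotoneOn_weightedLength (hc : 0 ≤ c) (hd : 0 ≤ d) :
    MonotoneOn (weightedLength a c d V) (Ici a) := by
  intro x hx y _ hxy
  rw [← sub_nonneg, weightedLength_sub hx hxy]
  positivity

lemma weightedLength_sub_of_Ioc_subset (hax : a ≤ x) (hxy : x ≤ y) (hV : Ioc x y ⊆ V) :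
    weightedLength a c d V y - weightedLength a c d V x = d * (y - x) := by
  rw [weightedLength_sub hax hxy, sdiff_eq_empty.2 hV, inter_eq_left.2 hV, measureReal_empty,
    Real.volume_real_Ioc_of_le hxy, mul_zero, zero_add]

lemma weightedLength_sub_of_Ioo_subset {r s : ℝ} (hV : Ioo r s ⊆ Ici a ∩ V)
    (hx : x ∈ Ioo r s) (hy : y ∈ Ioo r s) :
    weightedLength a c d V y - weightedLength a c d V x = d * (y - x) := by
  wlog hxy : x ≤ y generalizing x y
  · linarith [this hy hx (le_of_not_ge hxy)]
  exact weightedLength_sub_of_Ioc_subset (hV hx).1 hxy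
    fun z hz => (hV ⟨hx.1.trans_le hz.1.le, hz.2.trans_lt hy.2⟩).2

lemma lipschitzOnWith_weightedLength (hV : MeasurableSet V) (hc : 0 ≤ c) (hd : 0 ≤ d)
    {K : ℝ≥0} (hcK : c ≤ K) (hdK : d ≤ K) :
    LipschitzOnWith K (weightedLength a c d V) (Ici a) := by
  refine LipschitzOnWith.of_le_add_mul K fun x hx y hy => ?_
  rcases le_total x y with hxy | hyx
  · linarith [monotoneOn_weightedLength (V := V) hc hd hx hy hxy,
      mul_nonneg K.coe_nonneg (dist_nonneg (x := x) (y := y))]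
  · have hsplit : volume.real (Ioc y x \ V) + volume.real (Ioc y x ∩ V) = dist x y := by
      rw [measureReal_sdiff_add_inter hV measure_Ioc_lt_top.ne, Real.volume_real_Ioc_of_le hyx,
        Real.dist_eq, abs_of_nonneg (sub_nonneg.2 hyx)]
    have hbound : c * volume.real (Ioc y x \ V) + d * volume.real (Ioc y x ∩ V) ≤
        K * volume.real (Ioc y x \ V) + K * volume.real (Ioc y x ∩ V) := by
      gcongr
    rw [← mul_add, hsplit] at hbound
    linarith [weightedLength_sub (c := c) (d := d) (V := V) hy hyx]

end WeightedLength

theorem affine_redistribution_lemma (a b : ℝ) (hab : a < b)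
    (V : Set ℝ) (hVopen : IsOpen V)
    (n : ℕ) (hn : 1 ≤ n) (h f : ℝ → ℝ) (m : ℝ) (hm : 1 < m)
    (α : ℝ) (hα : α = (volume (Icc a b \ V)).toReal)
    (hf : ∀ x ∈ Icc a b,
      f x = h a + ((m - (2 : ℝ) ^ (1 - (n : ℤ))) * (b - a) / α + (2 : ℝ) ^ (-(n : ℤ))) *
          (volume (Icc a x \ V)).toReal +
        (2 : ℝ) ^ (-(n : ℤ)) * (volume (Icc a x ∩ V)).toReal) :
    MonotoneOn f (Icc a b) ∧
    f a = h a ∧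
    (∀ r s : ℝ, Ioo r s ⊆ Ioo a b ∩ V →
      ∀ x ∈ Ioo r s, ∀ y ∈ Ioo r s, f y - f x = (2 : ℝ) ^ (-(n : ℤ)) * (y - x)) ∧
    (∃ K : ℝ≥0, LipschitzOnWith K f (Icc a b)) := by
  set c := (m - (2 : ℝ) ^ (1 - (n : ℤ))) * (b - a) / α + (2 : ℝ) ^ (-(n : ℤ))
  set d := (2 : ℝ) ^ (-(n : ℤ))
  have hd : 0 ≤ d := by positivity
  have hdc : d ≤ c := by
    have : (2 : ℝ) ^ (1 - (n : ℤ)) ≤ 1 := zpow_le_one_of_nonpos₀ one_le_two (by omega)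
    exact le_add_of_nonneg_left (div_nonneg (by nlinarith) (hα ▸ ENNReal.toReal_nonneg))
  have hfW : ∀ x ∈ Icc a b, f x = h a + weightedLength a c d V x := fun x hx =>
    (hf x hx).trans (add_assoc _ _ _)
  refine ⟨?_, ?_, ?_, ?_⟩
  · exact (((monotoneOn_weightedLength (hd.trans hdc) hd).mono Icc_subset_Ici_self).const_add
      (h a)).congr fun x hx => (hfW x hx).symm
  · rw [hfW a (left_mem_Icc.2 hab.le), weightedLength_self, add_zero]
  · intro r s hrs x hx y hy
    have hsub : Ioo r s ⊆ Icc a b := fun z hz => Ioo_subset_Icc_self (hrs hz).1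
    rw [hfW y (hsub hy), hfW x (hsub hx), add_sub_add_left_eq_sub]
    have hrsa : Ioo r s ⊆ Ici a ∩ V := fun z hz => ⟨(hrs hz).1.1.le, (hrs hz).2⟩
    exact weightedLength_sub_of_Ioo_subset hrsa hx hy
  · refine ⟨c.toNNReal, LipschitzOnWith.of_le_add_mul _ fun x hx y hy => ?_⟩
    have hcK := Real.le_coe_toNNReal c
    have := (lipschitzOnWith_weightedLength hVopen.measurableSet (hd.trans hdc) hd hcK
      (hdc.trans hcK)).le_add_mul hx.1 hy.1
    rw [hfW x hx, hfW y hy]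
    linarith
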